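/- arXiv:1507.04861 — 2 statements merged into one kernel-verified Lean document; each statement's English description precedes it below -/
import Mathlib

section
/- Let d ≥ 1, M > 0, R > 0, and let k : ℝᵈ → ℝ be a nonnegative, symmetric (k(−x) = k(x)) kernel with ∫_{ℝᵈ} k = 1. Then there exists a constant C such that for every ε > 0 and every φ ∈ C_c^∞(ℝᵈ): ∫_{ℝᵈ} [ ε^{−2}((k_ε * φ)(x) − φ(x)) − x·∇φ(x) − (k_ε * (M χ_R φ))(x) ] φ(x) dx ≤ − (1/(2ε²)) ∫_{ℝᵈ×ℝᵈ} k_ε(x−y) (φ(x) − φ(y))² dx dy + C ∫_{ℝᵈ} φ(x)² dx, where k_ε(x) := ε^{−d} k(x/ε). -/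
open MeasureTheory Real Filter
open scoped ENNReal Topology FourierTransform RealInnerProductSpace

noncomputable section

/-- `ℝᵈ` as a Euclidean space. -/
abbrev E (d : ℕ) := EuclideanSpace ℝ (Fin d)

/-- The Japanese bracket `⟨x⟩ = (1+|x|²)^(1/2)`. -/
def jap {d : ℕ} (x : E d) : ℝ := Real.sqrt (1 + ‖x‖^2)

/-- Convolution `(k * f)(x) = ∫ k(x−y) f(y) dy`. -/
def conv {d : ℕ} (k f : E d → ℝ) (x : E d) : ℝ := ∫ y, k (x - y) * f y

/-- The rescaled kernel `k_ε(x) = ε^(−d) k(x/ε)`. -/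
def resc {d : ℕ} (k : E d → ℝ) (ε : ℝ) (x : E d) : ℝ := (ε ^ d)⁻¹ * k (ε⁻¹ • x)

section helpers
namespace DissipAux

variable {d : ℕ} {κ f g : E d → ℝ}

lemma aesm_sub (hκ : AEStronglyMeasurable κ (volume : Measure (E d))) :
    AEStronglyMeasurable (fun p : E d × E d => κ (p.1 - p.2))
      ((volume : Measure (E d)).prod volume) :=
  hκ.comp_quasiMeasurePreserving
    ((Measure.quasiMeasurePreserving_fst).comp
      (measurePreserving_sub_prod volume volume).quasiMeasurePreserving)

lemma intProd (hκ : Integrable κ (volume : Measure (E d)))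
    (hf : AEStronglyMeasurable f (volume : Measure (E d))) {C : ℝ} (hfC : ∀ x, |f x| ≤ C)
    (hg : Integrable g (volume : Measure (E d))) :
    Integrable (fun p : E d × E d => κ (p.1 - p.2) * f p.1 * g p.2)
      ((volume : Measure (E d)).prod volume) := by
  have base : Integrable (fun q : E d × E d => |κ q.1| * (C * |g q.2|))
      ((volume : Measure (E d)).prod volume) := hκ.abs.mul_prod (hg.abs.const_mul C)
  have shear : MeasurePreserving (fun z : E d × E d => (z.1 - z.2, z.2))
      ((volume : Measure (E d)).prod volume) ((volume : Measure (E d)).prod volume) :=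
    measurePreserving_sub_prod volume volume
  have maj : Integrable (fun p : E d × E d => |κ (p.1 - p.2)| * (C * |g p.2|))
      ((volume : Measure (E d)).prod volume) := by
    have h := (shear.integrable_comp base.aestronglyMeasurable).2 base
    simpa [Function.comp_def] using h
  have meas : AEStronglyMeasurable (fun p : E d × E d => κ (p.1 - p.2) * f p.1 * g p.2)
      ((volume : Measure (E d)).prod volume) :=
    ((aesm_sub hκ.aestronglyMeasurable).mul hf.comp_fst).mul hg.aestronglyMeasurable.comp_snd
  refine maj.mono' meas (Eventually.of_forall fun p => ?_)
  have h1 : |f p.1| ≤ C := hfC p.1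
  have h2 : (0:ℝ) ≤ C := le_trans (abs_nonneg _) h1
  calc ‖κ (p.1 - p.2) * f p.1 * g p.2‖
      = |κ (p.1 - p.2)| * (|f p.1| * |g p.2|) := by
        simp [Real.norm_eq_abs, abs_mul, mul_assoc]
    _ ≤ |κ (p.1 - p.2)| * (C * |g p.2|) := by
        apply mul_le_mul_of_nonneg_left _ (abs_nonneg _)
        exact mul_le_mul_of_nonneg_right h1 (abs_nonneg _)

lemma intProd' (hκ : Integrable κ (volume : Measure (E d)))
    (hf : Integrable f (volume : Measure (E d)))
    (hg : AEStronglyMeasurable g (volume : Measure (E d))) {C : ℝ} (hgC : ∀ x, |g x| ≤ C) :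
    Integrable (fun p : E d × E d => κ (p.1 - p.2) * f p.1 * g p.2)
      ((volume : Measure (E d)).prod volume) := by
  have hκn : Integrable (fun x : E d => κ (-x)) volume := hκ.comp_neg
  have h := intProd hκn hg hgC hf
  have hswap : MeasurePreserving (Prod.swap : E d × E d → E d × E d)
      ((volume : Measure (E d)).prod volume) ((volume : Measure (E d)).prod volume) :=
    Measure.measurePreserving_swap
  have h2 := (hswap.integrable_comp h.aestronglyMeasurable).2 h
  have : ((fun p : E d × E d => κ (-(p.1 - p.2)) * g p.1 * f p.2) ∘ Prod.swap)
      = fun p : E d × E d => κ (p.1 - p.2) * f p.1 * g p.2 := by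
    funext p
    simp [Function.comp, neg_sub]
    ring
  rwa [this] at h2

lemma intFst (hκ : Integrable κ (volume : Measure (E d)))
    (hf : Integrable f (volume : Measure (E d))) :
    Integrable (fun p : E d × E d => κ (p.1 - p.2) * f p.1)
      ((volume : Measure (E d)).prod volume) := by
  have h := intProd' (g := fun _ : E d => (1:ℝ)) hκ hf aestronglyMeasurable_const
    (C := 1) (fun x => by norm_num)
  simpa using h

lemma intSnd (hκ : Integrable κ (volume : Measure (E d)))
    (hf : Integrable f (volume : Measure (E d))) :
    Integrable (fun p : E d × E d => κ (p.1 - p.2) * f p.2)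
      ((volume : Measure (E d)).prod volume) := by
  have h := intProd (f := fun _ : E d => (1:ℝ)) hκ aestronglyMeasurable_const
    (C := 1) (fun x => by norm_num) hf
  simpa [mul_comm, mul_assoc, mul_left_comm] using h

lemma integral_fst (hκ : Integrable κ (volume : Measure (E d))) (hκ1 : ∫ x, κ x = 1)
    (hf : Integrable f (volume : Measure (E d))) :
    ∫ p : E d × E d, κ (p.1 - p.2) * f p.1 ∂((volume : Measure (E d)).prod volume)
      = ∫ x, f x := by
  rw [integral_prod _ (intFst hκ hf)]
  have : ∀ x : E d, (∫ y, κ (x - y) * f x) = f x := by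
    intro x
    rw [integral_mul_const, integral_sub_left_eq_self κ volume x, hκ1, one_mul]
  simp_rw [this]

lemma integral_snd (hκ : Integrable κ (volume : Measure (E d))) (hκ1 : ∫ x, κ x = 1)
    (hf : Integrable f (volume : Measure (E d))) :
    ∫ p : E d × E d, κ (p.1 - p.2) * f p.2 ∂((volume : Measure (E d)).prod volume)
      = ∫ y, f y := by
  rw [integral_prod_symm _ (intSnd hκ hf)]
  have : ∀ y : E d, (∫ x, κ (x - y) * f y) = f y := by
    intro y
    rw [integral_mul_const, integral_sub_right_eq_self κ y, hκ1, one_mul]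
  simp_rw [this]

lemma conv_mul_eq (hκ : Integrable κ (volume : Measure (E d)))
    (hf : Continuous f) (hfc : HasCompactSupport f)
    (hg : Continuous g) (hgc : HasCompactSupport g) :
    ∫ x, conv κ g x * f x
      = ∫ p : E d × E d, κ (p.1 - p.2) * g p.2 * f p.1 ∂((volume : Measure (E d)).prod volume) := by
  obtain ⟨Cf, hCf⟩ := hfc.exists_bound_of_continuous hf
  have hgi : Integrable g volume := hg.integrable_of_hasCompactSupport hgc
  have hint : Integrable (fun p : E d × E d => κ (p.1 - p.2) * f p.1 * g p.2)
      ((volume : Measure (E d)).prod volume) :=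
    intProd hκ hf.aestronglyMeasurable
      (fun x => by simpa [Real.norm_eq_abs] using hCf x) hgi
  have hint2 : Integrable (fun p : E d × E d => κ (p.1 - p.2) * g p.2 * f p.1)
      ((volume : Measure (E d)).prod volume) := by
    have : (fun p : E d × E d => κ (p.1 - p.2) * g p.2 * f p.1)
        = fun p : E d × E d => κ (p.1 - p.2) * f p.1 * g p.2 := by
      funext p; ring
    rw [this]; exact hint
  have h1 : ∀ x, conv κ g x * f x = ∫ y, κ (x - y) * g y * f x := by
    intro x
    rw [conv, ← integral_mul_const]
  simp_rw [h1]
  exact (integral_prod _ hint2).symm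

lemma integrable_conv_mul (hκ : Integrable κ (volume : Measure (E d)))
    (hf : Continuous f) (hfc : HasCompactSupport f)
    (hg : Continuous g) (hgc : HasCompactSupport g) :
    Integrable (fun x => conv κ g x * f x) (volume : Measure (E d)) := by
  obtain ⟨Cf, hCf⟩ := hfc.exists_bound_of_continuous hf
  have hgi : Integrable g volume := hg.integrable_of_hasCompactSupport hgc
  have hint2 : Integrable (fun p : E d × E d => κ (p.1 - p.2) * g p.2 * f p.1)
      ((volume : Measure (E d)).prod volume) := by
    have : (fun p : E d × E d => κ (p.1 - p.2) * g p.2 * f p.1)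
        = fun p : E d × E d => κ (p.1 - p.2) * f p.1 * g p.2 := by
      funext p; ring
    rw [this]
    exact intProd hκ hf.aestronglyMeasurable
      (fun x => by simpa [Real.norm_eq_abs] using hCf x) hgi
  have h := hint2.integral_prod_left
  refine h.congr (Eventually.of_forall fun x => ?_)
  show (∫ y, κ (x - y) * g y * f x) = conv κ g x * f x
  rw [conv, ← integral_mul_const]

end DissipAux
end helpers

/-- Dissipativity estimate for the formal dual `B_ε^*` of the dissipative part
of the discrete Fokker–Planck operator:
`∫ (B_ε^* φ) φ ≤ − I_ε(φ) + C ∫ φ²` uniformly in `ε > 0`, where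
`B_ε^* φ = ε⁻²(k_ε*φ − φ) − x·∇φ − k_ε*(M χ_R φ)` and
`I_ε(φ) = (1/(2ε²)) ∫∫ k_ε(x−y)(φ(x)−φ(y))² dx dy`. -/
theorem dual_Beps_dissipativity
    (d : ℕ) (hd : 1 ≤ d) (M R : ℝ) (hM : 0 < M) (hR : 0 < R)
    -- the truncation function χ
    (χ : E d → ℝ) (hχs : ContDiff ℝ (⊤ : ℕ∞) χ) (hχc : HasCompactSupport χ)
    (hχrad : ∀ x y : E d, ‖x‖ = ‖y‖ → χ x = χ y)
    (hχ01 : ∀ x, 0 ≤ χ x ∧ χ x ≤ 1)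
    (hχball : ∀ x : E d, ‖x‖ < 1 → χ x = 1)
    (hχout : ∀ x : E d, 2 ≤ ‖x‖ → χ x = 0)
    -- the kernel k
    (k : E d → ℝ) (hk0 : ∀ x, 0 ≤ k x) (hksym : ∀ x, k (-x) = k x)
    (hkint : Integrable k) (hk1 : ∫ x, k x = 1) :
    ∃ C : ℝ, 0 < C ∧ ∀ ε : ℝ, 0 < ε →
      ∀ φ : E d → ℝ, ContDiff ℝ (⊤ : ℕ∞) φ → HasCompactSupport φ →
        ∫ x, ((ε ^ 2)⁻¹ * (conv (resc k ε) φ x - φ x) - fderiv ℝ φ x x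
              - conv (resc k ε) (fun y => M * χ (R⁻¹ • y) * φ y) x) * φ x
          ≤ -((2 * ε ^ 2)⁻¹ * ∫ x, ∫ y, resc k ε (x - y) * (φ x - φ y) ^ 2)
            + C * ∫ x, φ x ^ 2 := by
  classical
  refine ⟨(d : ℝ) / 2 + M, by positivity, ?_⟩
  intro ε hε φ hφ hφc
  set κ : E d → ℝ := resc k ε with hκdef
  have hεd : (0:ℝ) < ε ^ d := pow_pos hε d
  have hε2 : (0:ℝ) < ε ^ 2 := pow_pos hε 2
  -- kernel facts
  have hκint : Integrable κ (volume : Measure (E d)) := by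
    have h := (hkint.comp_smul (R := ε⁻¹) (inv_ne_zero hε.ne'))
    exact h.const_mul (ε ^ d)⁻¹
  have hκ0 : ∀ x, 0 ≤ κ x := fun x => mul_nonneg (inv_nonneg.2 hεd.le) (hk0 _)
  have hκ1 : ∫ x, κ x = 1 := by
    have h1 : ∫ x, κ x = (ε ^ d)⁻¹ * ∫ x : E d, k (ε⁻¹ • x) := by
      simp only [hκdef, resc]
      rw [integral_const_mul]
    rw [h1, Measure.integral_comp_smul volume k ε⁻¹, finrank_euclideanSpace_fin, hk1]
    have h2 : |((ε⁻¹ : ℝ) ^ d)⁻¹| = ε ^ d := by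
      rw [← inv_pow, inv_inv, abs_of_pos hεd]
    rw [h2, smul_eq_mul, mul_one, inv_mul_cancel₀ hεd.ne']
  -- φ facts
  have hφcont : Continuous φ := hφ.continuous
  obtain ⟨Cφ, hCφ⟩ := hφc.exists_bound_of_continuous hφcont
  have hCφ' : ∀ x, |φ x| ≤ Cφ := fun x => by simpa [Real.norm_eq_abs] using hCφ x
  have hφint : Integrable φ (volume : Measure (E d)) :=
    hφcont.integrable_of_hasCompactSupport hφc
  have hφ2int : Integrable (fun x => φ x ^ 2) (volume : Measure (E d)) := by
    have hcs : HasCompactSupport (fun x : E d => φ x * φ x) := hφc.mul_left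
    have h : Integrable (fun x : E d => φ x * φ x) (volume : Measure (E d)) :=
      (hφcont.mul hφcont).integrable_of_hasCompactSupport hcs
    exact h.congr (Eventually.of_forall fun x => by ring)
  -- the truncated function g
  set g : E d → ℝ := fun y => M * χ (R⁻¹ • y) * φ y with hgdef
  have hgcont : Continuous g :=
    (continuous_const.mul (hχs.continuous.comp (continuous_const_smul _))).mul hφcont
  have hgcs : HasCompactSupport g := hφc.mul_left
  have hgbound : ∀ y, |g y| ≤ M * |φ y| := by
    intro y
    obtain ⟨h0, h1⟩ := hχ01 (R⁻¹ • y)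
    have e : |g y| = M * χ (R⁻¹ • y) * |φ y| := by
      rw [hgdef]; rw [abs_mul, abs_mul, abs_of_pos hM, abs_of_nonneg h0]
    rw [e]
    have e2 : M * χ (R⁻¹ • y) * |φ y| ≤ M * 1 * |φ y| := by
      apply mul_le_mul_of_nonneg_right _ (abs_nonneg _)
      exact mul_le_mul_of_nonneg_left h1 hM.le
    simpa using e2
  -- integrability of products on the product space
  have e1 : Integrable (fun p : E d × E d => κ (p.1 - p.2) * φ p.1 ^ 2)
      ((volume : Measure (E d)).prod volume) := DissipAux.intFst hκint hφ2int
  have e2 : Integrable (fun p : E d × E d => κ (p.1 - p.2) * φ p.2 ^ 2)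
      ((volume : Measure (E d)).prod volume) := DissipAux.intSnd hκint hφ2int
  have e3 : Integrable (fun p : E d × E d => κ (p.1 - p.2) * φ p.2 * φ p.1)
      ((volume : Measure (E d)).prod volume) := by
    have h := DissipAux.intProd hκint hφcont.aestronglyMeasurable hCφ' hφint
    exact h.congr (Eventually.of_forall fun p => by ring)
  have e4 : Integrable (fun p : E d × E d => κ (p.1 - p.2) * g p.2 * φ p.1)
      ((volume : Measure (E d)).prod volume) := by
    have h := DissipAux.intProd hκint hφcont.aestronglyMeasurable hCφ'
      (hgcont.integrable_of_hasCompactSupport hgcs)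
    exact h.congr (Eventually.of_forall fun p => by ring)
  -- values of the basic double integrals
  have v1 : ∫ p : E d × E d, κ (p.1 - p.2) * φ p.1 ^ 2 ∂((volume : Measure (E d)).prod volume)
      = ∫ x, φ x ^ 2 := DissipAux.integral_fst hκint hκ1 hφ2int
  have v2 : ∫ p : E d × E d, κ (p.1 - p.2) * φ p.2 ^ 2 ∂((volume : Measure (E d)).prod volume)
      = ∫ x, φ x ^ 2 := DissipAux.integral_snd hκint hκ1 hφ2int
  have v3 : ∫ x, conv κ φ x * φ x
      = ∫ p : E d × E d, κ (p.1 - p.2) * φ p.2 * φ p.1 ∂((volume : Measure (E d)).prod volume) :=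
    DissipAux.conv_mul_eq hκint hφcont hφc hφcont hφc
  have v4 : ∫ x, conv κ g x * φ x
      = ∫ p : E d × E d, κ (p.1 - p.2) * g p.2 * φ p.1 ∂((volume : Measure (E d)).prod volume) :=
    DissipAux.conv_mul_eq hκint hφcont hφc hgcont hgcs
  have hadd : Integrable
      (fun p : E d × E d => κ (p.1 - p.2) * φ p.1 ^ 2 + κ (p.1 - p.2) * φ p.2 ^ 2)
      ((volume : Measure (E d)).prod volume) := e1.add e2
  -- Step 1 : Dirichlet form identity
  have Jprod : Integrable (fun p : E d × E d => κ (p.1 - p.2) * (φ p.1 - φ p.2) ^ 2)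
      ((volume : Measure (E d)).prod volume) := by
    have h := hadd.sub (e3.const_mul 2)
    exact h.congr (Eventually.of_forall fun p => by
      simp only [Pi.sub_apply]; ring)
  have hJsplit : (∫ x, ∫ y, κ (x - y) * (φ x - φ y) ^ 2)
      = 2 * (∫ x, φ x ^ 2) - 2 * ∫ x, conv κ φ x * φ x := by
    have hJ : (∫ x, ∫ y, κ (x - y) * (φ x - φ y) ^ 2)
        = ∫ p : E d × E d, κ (p.1 - p.2) * (φ p.1 - φ p.2) ^ 2
            ∂((volume : Measure (E d)).prod volume) :=
      (integral_prod _ Jprod).symm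
    have hpt : ∀ p : E d × E d, κ (p.1 - p.2) * (φ p.1 - φ p.2) ^ 2
        = (κ (p.1 - p.2) * φ p.1 ^ 2 + κ (p.1 - p.2) * φ p.2 ^ 2)
          - 2 * (κ (p.1 - p.2) * φ p.2 * φ p.1) := fun p => by ring
    have h1 : ∫ p : E d × E d, κ (p.1 - p.2) * (φ p.1 - φ p.2) ^ 2
          ∂((volume : Measure (E d)).prod volume)
        = ∫ p : E d × E d, ((κ (p.1 - p.2) * φ p.1 ^ 2 + κ (p.1 - p.2) * φ p.2 ^ 2)
            - 2 * (κ (p.1 - p.2) * φ p.2 * φ p.1)) ∂((volume : Measure (E d)).prod volume) :=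
      integral_congr_ae (Eventually.of_forall hpt)
    have hs1 : ∫ p : E d × E d, ((κ (p.1 - p.2) * φ p.1 ^ 2 + κ (p.1 - p.2) * φ p.2 ^ 2)
            - 2 * (κ (p.1 - p.2) * φ p.2 * φ p.1)) ∂((volume : Measure (E d)).prod volume)
        = (∫ p : E d × E d, (κ (p.1 - p.2) * φ p.1 ^ 2 + κ (p.1 - p.2) * φ p.2 ^ 2)
            ∂((volume : Measure (E d)).prod volume))
          - ∫ p : E d × E d, 2 * (κ (p.1 - p.2) * φ p.2 * φ p.1)
            ∂((volume : Measure (E d)).prod volume) :=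
      integral_sub hadd (e3.const_mul 2)
    have hs2 : ∫ p : E d × E d, (κ (p.1 - p.2) * φ p.1 ^ 2 + κ (p.1 - p.2) * φ p.2 ^ 2)
            ∂((volume : Measure (E d)).prod volume)
        = (∫ p : E d × E d, κ (p.1 - p.2) * φ p.1 ^ 2 ∂((volume : Measure (E d)).prod volume))
          + ∫ p : E d × E d, κ (p.1 - p.2) * φ p.2 ^ 2 ∂((volume : Measure (E d)).prod volume) :=
      integral_add e1 e2
    have hs3 : ∫ p : E d × E d, 2 * (κ (p.1 - p.2) * φ p.2 * φ p.1)
            ∂((volume : Measure (E d)).prod volume)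
        = 2 * ∫ p : E d × E d, (κ (p.1 - p.2) * φ p.2 * φ p.1)
            ∂((volume : Measure (E d)).prod volume) :=
      integral_const_mul 2 _
    rw [hJ, h1, hs1, hs2, hs3, v1, v2, ← v3]
    ring
  -- Step 2 : bound for the g-term
  have hDbound : -(∫ x, conv κ g x * φ x) ≤ M * ∫ x, φ x ^ 2 := by
    rw [v4]
    have hmajint : Integrable
        (fun p : E d × E d => κ (p.1 - p.2) * (M / 2 * (φ p.1 ^ 2 + φ p.2 ^ 2)))
        ((volume : Measure (E d)).prod volume) := by
      have h := hadd.const_mul (M / 2)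
      exact h.congr (Eventually.of_forall fun p => by ring)
    have hmono : ∫ p : E d × E d, -(κ (p.1 - p.2) * g p.2 * φ p.1)
          ∂((volume : Measure (E d)).prod volume)
        ≤ ∫ p : E d × E d, κ (p.1 - p.2) * (M / 2 * (φ p.1 ^ 2 + φ p.2 ^ 2))
          ∂((volume : Measure (E d)).prod volume) := by
      refine integral_mono e4.neg hmajint fun p => ?_
      have hk := hκ0 (p.1 - p.2)
      have hg' := hgbound p.2
      have habs : -(κ (p.1 - p.2) * g p.2 * φ p.1) ≤ κ (p.1 - p.2) * (|g p.2| * |φ p.1|) := by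
        calc -(κ (p.1 - p.2) * g p.2 * φ p.1) ≤ |κ (p.1 - p.2) * g p.2 * φ p.1| :=
              neg_le_abs _
        _ = κ (p.1 - p.2) * (|g p.2| * |φ p.1|) := by
              rw [abs_mul, abs_mul, abs_of_nonneg hk, mul_assoc]
      refine habs.trans ?_
      apply mul_le_mul_of_nonneg_left _ hk
      nlinarith [sq_nonneg (|φ p.1| - |φ p.2|), sq_abs (φ p.1), sq_abs (φ p.2),
        abs_nonneg (φ p.1), abs_nonneg (φ p.2), hM.le,
        mul_le_mul_of_nonneg_right hg' (abs_nonneg (φ p.1))]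
    have hmaj_val : ∫ p : E d × E d, κ (p.1 - p.2) * (M / 2 * (φ p.1 ^ 2 + φ p.2 ^ 2))
          ∂((volume : Measure (E d)).prod volume) = M * ∫ x, φ x ^ 2 := by
      have hpt : ∀ p : E d × E d, κ (p.1 - p.2) * (M / 2 * (φ p.1 ^ 2 + φ p.2 ^ 2))
          = M / 2 * (κ (p.1 - p.2) * φ p.1 ^ 2 + κ (p.1 - p.2) * φ p.2 ^ 2) := fun p => by ring
      have h : ∫ p : E d × E d, κ (p.1 - p.2) * (M / 2 * (φ p.1 ^ 2 + φ p.2 ^ 2))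
            ∂((volume : Measure (E d)).prod volume)
          = ∫ p : E d × E d, (M / 2 * (κ (p.1 - p.2) * φ p.1 ^ 2 + κ (p.1 - p.2) * φ p.2 ^ 2))
            ∂((volume : Measure (E d)).prod volume) :=
        integral_congr_ae (Eventually.of_forall hpt)
      have hs2 : ∫ p : E d × E d, (κ (p.1 - p.2) * φ p.1 ^ 2 + κ (p.1 - p.2) * φ p.2 ^ 2)
              ∂((volume : Measure (E d)).prod volume)
          = (∫ p : E d × E d, κ (p.1 - p.2) * φ p.1 ^ 2 ∂((volume : Measure (E d)).prod volume))
            + ∫ p : E d × E d, κ (p.1 - p.2) * φ p.2 ^ 2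
              ∂((volume : Measure (E d)).prod volume) :=
        integral_add e1 e2
      rw [h, integral_const_mul, hs2, v1, v2]
      ring
    calc -(∫ p : E d × E d, κ (p.1 - p.2) * g p.2 * φ p.1
          ∂((volume : Measure (E d)).prod volume))
        = ∫ p : E d × E d, -(κ (p.1 - p.2) * g p.2 * φ p.1)
          ∂((volume : Measure (E d)).prod volume) := (integral_neg _).symm
      _ ≤ _ := hmono
      _ = M * ∫ x, φ x ^ 2 := hmaj_val
  -- Step 3 : the drift term via integration by parts
  have hφdiff : Differentiable ℝ φ := hφ.differentiable (by simp)
  have hfdcont : Continuous (fun x : E d => fderiv ℝ φ x) := hφ.continuous_fderiv (by simp)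
  have hBterm : ∫ x, fderiv ℝ φ x x * φ x = -((d : ℝ) / 2) * ∫ x, φ x ^ 2 := by
    have hIi : ∀ i : Fin d,
        ∫ x : E d, x i * fderiv ℝ φ x (EuclideanSpace.single i 1) * φ x
          = -(1 / 2) * ∫ x, φ x ^ 2 := by
      intro i
      set v : E d := EuclideanSpace.single i (1:ℝ) with hv
      set gi : E d → ℝ := fun x => x i * φ x with hgidef
      have hcoord : ∀ x : E d, HasFDerivAt (fun y : E d => y i)
          (EuclideanSpace.proj (𝕜 := ℝ) i) x := fun x =>
        (EuclideanSpace.proj (𝕜 := ℝ) i).hasFDerivAt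
      have hcoordc : Continuous (fun y : E d => y i) :=
        (EuclideanSpace.proj (𝕜 := ℝ) i).continuous
      have hgi_diff : Differentiable ℝ gi :=
        fun x => ((hcoord x).differentiableAt.mul (hφdiff x))
      have hproj : (EuclideanSpace.proj (𝕜 := ℝ) i) v = 1 := by
        simp [hv, EuclideanSpace.single_apply]
      have hgideriv : ∀ x : E d, fderiv ℝ gi x v = x i * fderiv ℝ φ x v + φ x := by
        intro x
        have h3 := (hcoord x).mul (hφdiff x).hasFDerivAt
        have h4 := h3.fderiv
        rw [hgidef]
        rw [show (fun x : E d => x i * φ x) = (fun y : E d => y i) * φ from rfl, h4]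
        simp only [ContinuousLinearMap.add_apply, ContinuousLinearMap.coe_smul',
          Pi.smul_apply, smul_eq_mul, hproj, mul_one]
      have hgics : HasCompactSupport gi := hφc.mul_left
      have gi_cont : Continuous gi := hcoordc.mul hφcont
      have int1 : Integrable (fun x : E d => x i * fderiv ℝ φ x v * φ x) volume := by
        refine Continuous.integrable_of_hasCompactSupport ?_ hφc.mul_left
        exact (hcoordc.mul (hfdcont.clm_apply continuous_const)).mul hφcont
      have i1 : Integrable (fun x : E d => fderiv ℝ φ x v * gi x) volume := by
        refine Continuous.integrable_of_hasCompactSupport ?_ hgics.mul_left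
        exact (hfdcont.clm_apply continuous_const).mul gi_cont
      have i2 : Integrable (fun x : E d => φ x * fderiv ℝ gi x v) volume := by
        have hc : Continuous (fun x : E d => φ x * (x i * fderiv ℝ φ x v + φ x)) :=
          hφcont.mul ((hcoordc.mul (hfdcont.clm_apply continuous_const)).add hφcont)
        have hcs2 : HasCompactSupport (fun x : E d => φ x * (x i * fderiv ℝ φ x v + φ x)) :=
          hφc.mul_right
        have h : Integrable (fun x : E d => φ x * (x i * fderiv ℝ φ x v + φ x))
            (volume : Measure (E d)) := hc.integrable_of_hasCompactSupport hcs2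
        refine h.congr (Eventually.of_forall fun x => ?_)
        show φ x * (x i * fderiv ℝ φ x v + φ x) = φ x * fderiv ℝ gi x v
        rw [hgideriv x]
      have i3 : Integrable (fun x : E d => φ x * gi x) volume :=
        (hφcont.mul gi_cont).integrable_of_hasCompactSupport hgics.mul_left
      have hibp := integral_mul_fderiv_eq_neg_fderiv_mul_of_integrable
        (f := φ) (g := gi) (v := v) i1 i2 i3 (fun x _ => hφdiff x) (fun x _ => hgi_diff x)
      have hpt1 : ∀ x : E d, φ x * fderiv ℝ gi x v
          = x i * fderiv ℝ φ x v * φ x + φ x ^ 2 := fun x => by rw [hgideriv x]; ring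
      have lhs_eq : ∫ x, φ x * fderiv ℝ gi x v
          = (∫ x, x i * fderiv ℝ φ x v * φ x) + ∫ x, φ x ^ 2 := by
        rw [integral_congr_ae (Eventually.of_forall hpt1), integral_add int1 hφ2int]
      have hpt2 : ∀ x : E d, fderiv ℝ φ x v * gi x
          = x i * fderiv ℝ φ x v * φ x := fun x => by simp only [hgidef]; ring
      have rhs_eq : ∫ x, fderiv ℝ φ x v * gi x = ∫ x, x i * fderiv ℝ φ x v * φ x :=
        integral_congr_ae (Eventually.of_forall hpt2)
      rw [lhs_eq, rhs_eq] at hibp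
      have : ∫ x : E d, x i * fderiv ℝ φ x v * φ x = -(1 / 2) * ∫ x, φ x ^ 2 := by
        linarith
      simpa [hv] using this
    have hdecomp : ∀ x : E d, fderiv ℝ φ x x
        = ∑ i : Fin d, x i * fderiv ℝ φ x (EuclideanSpace.single i 1) := by
      intro x
      have hxsum := (EuclideanSpace.basisFun (Fin d) ℝ).sum_repr x
      have hmap : (fderiv ℝ φ x) (∑ i : Fin d,
            ((EuclideanSpace.basisFun (Fin d) ℝ).repr x i) • (EuclideanSpace.basisFun (Fin d) ℝ) i)
          = ∑ i : Fin d, x i * fderiv ℝ φ x (EuclideanSpace.single i 1) := by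
        rw [map_sum]
        refine Finset.sum_congr rfl fun i _ => ?_
        rw [ContinuousLinearMap.map_smul]
        simp [EuclideanSpace.basisFun_apply, EuclideanSpace.basisFun_repr, smul_eq_mul]
      rw [← hmap, hxsum]
    have hint_each : ∀ i : Fin d, Integrable
        (fun x : E d => x i * fderiv ℝ φ x (EuclideanSpace.single i 1) * φ x) volume := by
      intro i
      refine Continuous.integrable_of_hasCompactSupport ?_ hφc.mul_left
      exact (((EuclideanSpace.proj (𝕜 := ℝ) i).continuous).mul
        (hfdcont.clm_apply continuous_const)).mul hφcont
    have hpt : ∀ x : E d, fderiv ℝ φ x x * φ x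
        = ∑ i : Fin d, x i * fderiv ℝ φ x (EuclideanSpace.single i 1) * φ x := by
      intro x
      rw [hdecomp x, Finset.sum_mul]
    have hsum : ∫ x, fderiv ℝ φ x x * φ x
        = ∑ i : Fin d, ∫ x : E d, x i * fderiv ℝ φ x (EuclideanSpace.single i 1) * φ x := by
      rw [integral_congr_ae (Eventually.of_forall hpt),
        integral_finset_sum _ (fun i _ => hint_each i)]
    rw [hsum]
    simp only [hIi]
    rw [Finset.sum_const, Finset.card_univ, Fintype.card_fin, nsmul_eq_mul]
    ring
  -- integrability of the four pieces of the main integrand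
  have hconvφφ : Integrable (fun x => conv κ φ x * φ x) volume :=
    DissipAux.integrable_conv_mul hκint hφcont hφc hφcont hφc
  have hconvgφ : Integrable (fun x => conv κ g x * φ x) volume :=
    DissipAux.integrable_conv_mul hκint hφcont hφc hgcont hgcs
  have hfderiv_int : Integrable (fun x => fderiv ℝ φ x x * φ x) volume := by
    refine Continuous.integrable_of_hasCompactSupport ?_ hφc.mul_left
    exact (hfdcont.clm_apply continuous_id).mul hφcont
  -- split the left-hand side
  have hw1 : Integrable (fun x => (ε ^ 2)⁻¹ * (conv κ φ x * φ x)) volume :=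
    hconvφφ.const_mul _
  have hw2 : Integrable (fun x => (ε ^ 2)⁻¹ * φ x ^ 2) volume := hφ2int.const_mul _
  have hw12 : Integrable (fun x => (ε ^ 2)⁻¹ * (conv κ φ x * φ x) - (ε ^ 2)⁻¹ * φ x ^ 2)
      volume := hw1.sub hw2
  have hw123 : Integrable (fun x => ((ε ^ 2)⁻¹ * (conv κ φ x * φ x) - (ε ^ 2)⁻¹ * φ x ^ 2)
      - fderiv ℝ φ x x * φ x) volume := hw12.sub hfderiv_int
  have hsplit : ∫ x, ((ε ^ 2)⁻¹ * (conv κ φ x - φ x) - fderiv ℝ φ x x - conv κ g x) * φ x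
      = (ε ^ 2)⁻¹ * (∫ x, conv κ φ x * φ x) - (ε ^ 2)⁻¹ * (∫ x, φ x ^ 2)
        - (∫ x, fderiv ℝ φ x x * φ x) - ∫ x, conv κ g x * φ x := by
    have hpt : ∀ x : E d,
        ((ε ^ 2)⁻¹ * (conv κ φ x - φ x) - fderiv ℝ φ x x - conv κ g x) * φ x
          = (((ε ^ 2)⁻¹ * (conv κ φ x * φ x) - (ε ^ 2)⁻¹ * φ x ^ 2)
              - fderiv ℝ φ x x * φ x) - conv κ g x * φ x := fun x => by ring
    rw [integral_congr_ae (Eventually.of_forall hpt), integral_sub hw123 hconvgφ,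
      integral_sub hw12 hfderiv_int, integral_sub hw1 hw2,
      integral_const_mul, integral_const_mul]
  -- finish
  have hq : (ε ^ 2)⁻¹ * (∫ x, conv κ φ x * φ x) - (ε ^ 2)⁻¹ * (∫ x, φ x ^ 2)
      = -((2 * ε ^ 2)⁻¹ * ∫ x, ∫ y, κ (x - y) * (φ x - φ y) ^ 2) := by
    have h1 : (∫ x, conv κ φ x * φ x) - (∫ x, φ x ^ 2)
        = -(2⁻¹ * ∫ x, ∫ y, κ (x - y) * (φ x - φ y) ^ 2) := by
      rw [hJsplit]; ring
    calc (ε ^ 2)⁻¹ * (∫ x, conv κ φ x * φ x) - (ε ^ 2)⁻¹ * (∫ x, φ x ^ 2)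
        = (ε ^ 2)⁻¹ * ((∫ x, conv κ φ x * φ x) - (∫ x, φ x ^ 2)) := by ring
      _ = (ε ^ 2)⁻¹ * (-(2⁻¹ * ∫ x, ∫ y, κ (x - y) * (φ x - φ y) ^ 2)) := by rw [h1]
      _ = -((2 * ε ^ 2)⁻¹ * ∫ x, ∫ y, κ (x - y) * (φ x - φ y) ^ 2) := by
          rw [mul_inv]; ring
  rw [hsplit]
  have hC : ((d : ℝ) / 2 + M) * ∫ x, φ x ^ 2
      = ((d : ℝ) / 2) * (∫ x, φ x ^ 2) + M * ∫ x, φ x ^ 2 := by ring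
  linarith [hq, hBterm, hDbound, hC]
end
end

section
/- Let d ≥ 1, ε > 0, and let k : ℝᵈ → ℝ be a nonnegative integrable kernel satisfying the positivity condition k ≥ κ₀ on the ball B(0,ρ) for some κ₀, ρ > 0. Let f ∈ C¹(ℝᵈ) ∩ L¹(ℝᵈ) be a nonnegative function, not identically zero, satisfying for all x ∈ ℝᵈ the stationary discrete Fokker–Planck equation ε^{−2} ( (k_ε * f)(x) − f(x) ) + x·∇f(x) + d f(x) = 0, where k_ε(x) := ε^{−d} k(x/ε). Then f(x) > 0 for every x ∈ ℝᵈ. -/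
open MeasureTheory Real Filter
open scoped ENNReal Topology FourierTransform RealInnerProductSpace

noncomputable section

/-- Strong maximum principle for the discrete Fokker–Planck operator: any
nonnegative, not identically zero `f ∈ C¹ ∩ L¹` solving
`ε⁻²(k_ε*f − f) + x·∇f + d f = 0` pointwise is everywhere positive. -/
theorem discrete_FP_strong_maximum_principle
    (d : ℕ) (hd : 1 ≤ d) (ε : ℝ) (hε : 0 < ε)
    (k : E d → ℝ) (hk0 : ∀ x, 0 ≤ k x) (hkint : Integrable k)
    (κ₀ ρ : ℝ) (hκ₀ : 0 < κ₀) (hρ : 0 < ρ)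
    (hkpos : ∀ x : E d, ‖x‖ ≤ ρ → κ₀ ≤ k x)
    (f : E d → ℝ) (hfC1 : ContDiff ℝ 1 f) (hfL1 : Integrable f)
    (hf0 : ∀ x, 0 ≤ f x) (hfne : f ≠ 0)
    (heq : ∀ x, (ε ^ 2)⁻¹ * (conv (resc k ε) f x - f x) + fderiv ℝ f x x + d * f x = 0) :
    ∀ x, 0 < f x := by
  have hεd : (0:ℝ) < (ε ^ d)⁻¹ := by positivity
  -- rescaled kernel is integrable and nonnegative
  have hrint : Integrable (resc k ε) := by
    have h1 : Integrable (fun x : E d => k (ε⁻¹ • x)) :=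
      (integrable_comp_smul_iff volume k (inv_ne_zero hε.ne')).2 hkint
    exact h1.const_mul ((ε ^ d)⁻¹)
  have hr0 : ∀ x, 0 ≤ resc k ε x := fun x => by
    exact mul_nonneg hεd.le (hk0 _)
  -- a.e. x, the convolution integrand is integrable
  have haeint : ∀ᵐ x : E d, Integrable (fun y => resc k ε (x - y) * f y) := by
    have h := (hfL1.convolution_integrand (ContinuousLinearMap.mul ℝ ℝ) hrint).prod_right_ae
    filter_upwards [h] with x hx
    simpa [mul_comm] using hx
  -- continuity facts
  have hfc : Continuous f := hfC1.continuous
  have hDc : Continuous (fun x : E d => fderiv ℝ f x x) :=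
    (hfC1.continuous_fderiv one_ne_zero).clm_apply continuous_id
  -- φ is what the equation says the convolution equals
  set φ : E d → ℝ := fun x => f x - ε ^ 2 * (fderiv ℝ f x x + d * f x) with hφdef
  have hφc : Continuous φ := by
    apply hfc.sub
    exact continuous_const.mul (hDc.add (continuous_const.mul hfc))
  have hconv_eq : ∀ x, conv (resc k ε) f x = φ x := by
    intro x
    have h := heq x
    have hε2 : (ε:ℝ) ^ 2 ≠ 0 := by positivity
    have key : conv (resc k ε) f x - f x = ε ^ 2 * ((ε ^ 2)⁻¹ * (conv (resc k ε) f x - f x)) := by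
      rw [← mul_assoc, mul_inv_cancel₀ hε2, one_mul]
    show _ = f x - ε ^ 2 * (fderiv ℝ f x x + d * f x)
    have h3 : (ε ^ 2)⁻¹ * (conv (resc k ε) f x - f x) = -(fderiv ℝ f x x + d * f x) := by linarith
    rw [h3] at key
    linarith
  -- the zero set
  set Z : Set (E d) := f ⁻¹' {0} with hZdef
  have hZclosed : IsClosed Z := isClosed_singleton.preimage hfc
  -- key step: Z is open (each zero point has a ball of zeros around it)
  have hZopen : IsOpen Z := by
    rw [Metric.isOpen_iff]
    intro x₀ hx₀
    refine ⟨ε * ρ, by positivity, fun y₀ hy₀ => ?_⟩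
    by_contra hy₀ne
    have hy₀pos : 0 < f y₀ := lt_of_le_of_ne (hf0 y₀) (fun h => hy₀ne (by simp [hZdef, ← h]))
    have hfx₀ : f x₀ = 0 := hx₀
    -- f ≥ δ on a small closed ball around y₀
    set δ : ℝ := f y₀ / 2 with hδdef
    have hδpos : 0 < δ := by positivity
    have hcont : ∀ᶠ z in 𝓝 y₀, δ < f z :=
      (hfc.tendsto y₀).eventually_const_lt (by simp [hδdef]; linarith)
    obtain ⟨r₁, hr₁pos, hr₁⟩ := Metric.eventually_nhds_iff_ball.1 hcont
    -- geometry: choose r, η₁ so that closedBall y₀ r ⊆ closedBall x (ε*ρ) for dist x x₀ ≤ η₁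
    set s : ℝ := ε * ρ - dist y₀ x₀ with hsdef
    have hspos : 0 < s := by simp [hsdef, Metric.mem_ball.1 hy₀]
    set r : ℝ := min (s / 4) (r₁ / 2) with hrdef
    have hrpos : 0 < r := by positivity
    set S : Set (E d) := Metric.closedBall y₀ r with hSdef
    have hSsub : ∀ x : E d, dist x x₀ ≤ s / 4 → ∀ z ∈ S, ‖x - z‖ ≤ ε * ρ := by
      intro x hx z hz
      have hz' : dist z y₀ ≤ r := Metric.mem_closedBall.1 hz
      have h1 : dist x z ≤ dist x x₀ + dist x₀ y₀ + dist y₀ z := dist_triangle4 x x₀ y₀ z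
      have h2 : dist x₀ y₀ = dist y₀ x₀ := dist_comm _ _
      have h3 : dist y₀ z = dist z y₀ := dist_comm _ _
      have hr4 : r ≤ s / 4 := min_le_left _ _
      rw [← dist_eq_norm]
      have : dist y₀ x₀ = ε * ρ - s := by rw [hsdef]; ring
      linarith
    have hfS : ∀ z ∈ S, δ ≤ f z := by
      intro z hz
      have : dist z y₀ < r₁ := lt_of_le_of_lt (Metric.mem_closedBall.1 hz)
        (lt_of_le_of_lt (min_le_right _ _) (by linarith))
      exact (hr₁ z (Metric.mem_ball.2 this)).le
    -- volume of S
    have hVpos : (0:ℝ) < (volume S).toReal :=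
      ENNReal.toReal_pos (Metric.measure_closedBall_pos volume y₀ hrpos).ne'
        measure_closedBall_lt_top.ne
    set c : ℝ := (ε ^ d)⁻¹ * κ₀ with hcdef
    have hcpos : 0 < c := by positivity
    set m : ℝ := c * δ * (volume S).toReal with hmdef
    have hmpos : 0 < m := by positivity
    -- lower bound for conv at integrable points near x₀
    have hlow : ∀ x : E d, dist x x₀ ≤ s / 4 →
        Integrable (fun y => resc k ε (x - y) * f y) → m ≤ conv (resc k ε) f x := by
      intro x hx hxint
      have hnn : 0 ≤ᵐ[volume] fun y => resc k ε (x - y) * f y :=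
        .of_forall fun y => mul_nonneg (hr0 _) (hf0 _)
      have h1 : ∫ y in S, resc k ε (x - y) * f y ≤ conv (resc k ε) f x :=
        setIntegral_le_integral hxint hnn
      have h2 : (c * δ) * (volume S).toReal ≤ ∫ y in S, resc k ε (x - y) * f y := by
        rw [show (c * δ) * (volume S).toReal = volume.real S • (c * δ) by
          show (c * δ) * (volume S).toReal = (volume S).toReal * (c * δ); ring]
        apply setIntegral_ge_of_const_le measurableSet_closedBall
          measure_closedBall_lt_top.ne
        · intro z hz
          have hk' : κ₀ ≤ k (ε⁻¹ • (x - z)) := by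
            apply hkpos
            rw [norm_smul, norm_inv, Real.norm_eq_abs, abs_of_pos hε]
            rw [inv_mul_le_iff₀ hε]
            exact hSsub x hx z hz
          have : c ≤ resc k ε (x - z) := by
            rw [hcdef, resc]
            exact mul_le_mul_of_nonneg_left hk' hεd.le
          calc c * δ ≤ resc k ε (x - z) * f z :=
                mul_le_mul this (hfS z hz) hδpos.le
                  (le_trans hcpos.le this)
          _ = _ := rfl
        · exact hxint.integrableOn
      calc m = (c * δ) * (volume S).toReal := by rw [hmdef]
        _ ≤ _ := h2
        _ ≤ _ := h1
    -- upper bound: φ → 0 near x₀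
    have hD0 : fderiv ℝ f x₀ = 0 :=
      IsLocalMin.fderiv_eq_zero (.of_forall fun x => hfx₀ ▸ hf0 x)
    have hφ0 : φ x₀ = 0 := by simp [hφdef, hfx₀, hD0]
    have hev : ∀ᶠ x in 𝓝 x₀, φ x < m :=
      (hφc.tendsto x₀).eventually_lt_const (hφ0 ▸ hmpos)
    obtain ⟨η, hηpos, hη⟩ := Metric.eventually_nhds_iff_ball.1 hev
    -- pick a point in the intersection with nonzero measure
    set B : Set (E d) := Metric.ball x₀ (min η (s / 4)) with hBdef
    have hBpos : (0:ℝ≥0∞) < volume B := Metric.measure_ball_pos _ _ (by positivity)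
    have : ∃ x ∈ B, Integrable (fun y => resc k ε (x - y) * f y) := by
      by_contra hno
      push_neg at hno
      have hsub : B ⊆ {x | ¬ Integrable (fun y => resc k ε (x - y) * f y)} :=
        fun x hx => hno x hx
      have : volume B = 0 := measure_mono_null hsub haeint
      exact absurd this hBpos.ne'
    obtain ⟨x, hxB, hxint⟩ := this
    have hxη : dist x x₀ < η := lt_of_lt_of_le (Metric.mem_ball.1 hxB) (min_le_left _ _)
    have hxs : dist x x₀ ≤ s / 4 :=
      le_of_lt (lt_of_lt_of_le (Metric.mem_ball.1 hxB) (min_le_right _ _))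
    have h1 : m ≤ conv (resc k ε) f x := hlow x hxs hxint
    have h2 : conv (resc k ε) f x < m := (hconv_eq x) ▸ hη x (Metric.mem_ball.2 hxη)
    linarith
  -- connectedness
  have := isClopen_iff.1 ⟨hZclosed, hZopen⟩
  rcases this with hZe | hZu
  · intro x
    rcases lt_or_eq_of_le (hf0 x) with h | h
    · exact h
    · exact absurd (show x ∈ Z from by simp [hZdef, ← h]) (by simp [hZe])
  · exfalso
    apply hfne
    funext x
    have : x ∈ Z := hZu ▸ Set.mem_univ x
    simpa [hZdef] using this
end
end
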